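/- arXiv:1702.05340 — 2 statements merged into one kernel-verified Lean document; each statement's English description precedes it below -/
import Mathlib

section
/- Given a monotone linkage function π (i.e., π(x,S) ≥ π(x,T) whenever S ⊆ T and x ∉ T), the set function M_π(T) = min_{x ∈ X \ T} π(x, T), defined on proper nonempty subsets T of the finite ground set X, is quasi-concave: for proper nonempty subsets S, T with S ∩ T nonempty and S ∪ T ≠ X, M_π(S ∩ T) ≥ min(M_π(S), M_π(T)). -/
open Finset

/-- `M_π T = min_{x ∉ T} π x T`. -/
noncomputable def Mpi {α : Type*} (π : α → Finset α → ℝ) (T : Finset α) : ℝ :=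
  sInf ((fun x => π x T) '' {x | x ∉ T})

section Mpi

variable {α : Type*} (π : α → Finset α → ℝ) {T : Finset α}

theorem Mpi_le [Finite α] {x : α} (hx : x ∉ T) : Mpi π T ≤ π x T :=
  csInf_le (Set.toFinite _ |>.image _).bddBelow ⟨x, hx, rfl⟩

theorem le_Mpi (hT : ∃ x, x ∉ T) {b : ℝ} (h : ∀ x ∉ T, b ≤ π x T) : b ≤ Mpi π T := by
  obtain ⟨y, hy⟩ := hT
  refine le_csInf ⟨π y T, y, hy, rfl⟩ ?_
  rintro _ ⟨x, hx, rfl⟩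
  exact h x hx

end Mpi

theorem stmt_5_general {α : Type*} [Fintype α] [DecidableEq α]
    (π : α → Finset α → ℝ)
    (hmono : ∀ (S T : Finset α) (x : α), S.Nonempty → S ⊆ T → T ⊂ Finset.univ →
      x ∉ T → π x T ≤ π x S)
    (S T : Finset α)
    (hSproper : S ⊂ Finset.univ)
    (hTproper : T ⊂ Finset.univ)
    (hST : (S ∩ T).Nonempty) :
    min (Mpi π S) (Mpi π T) ≤ Mpi π (S ∩ T) := by
  obtain ⟨y, -, hyS⟩ := exists_of_ssubset hSproper
  refine le_Mpi π ⟨y, fun hy => hyS (mem_inter.mp hy).1⟩ fun x hx => ?_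
  rcases not_and_or.mp (mt mem_inter.mpr hx) with hxS | hxT
  · calc min (Mpi π S) (Mpi π T) ≤ Mpi π S := min_le_left _ _
      _ ≤ π x S := Mpi_le π hxS
      _ ≤ π x (S ∩ T) := hmono _ _ x hST inter_subset_left hSproper hxS
  · calc min (Mpi π S) (Mpi π T) ≤ Mpi π T := min_le_right _ _
      _ ≤ π x T := Mpi_le π hxT
      _ ≤ π x (S ∩ T) := hmono _ _ x hST inter_subset_right hTproper hxT

theorem stmt_5 {α : Type*} [Fintype α] [DecidableEq α]
    (π : α → Finset α → ℝ)
    (hmono : ∀ (S T : Finset α) (x : α), S.Nonempty → S ⊆ T → T ⊂ Finset.univ →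
      x ∉ T → π x T ≤ π x S)
    (S T : Finset α)
    (hS : S.Nonempty) (hSproper : S ⊂ Finset.univ)
    (hT : T.Nonempty) (hTproper : T ⊂ Finset.univ)
    (hST : (S ∩ T).Nonempty) (hunion : S ∪ T ≠ Finset.univ) :
    min (Mpi π S) (Mpi π T) ≤ Mpi π (S ∩ T) :=
  stmt_5_general π hmono S T hSproper hTproper hST
end

section
/- Under the hypotheses of the π-series prefix theorem, if S is an inclusion-minimal maximizer of M_π over the nonempty proper subsets of X, and (x₁,…,x_N) is a π-series starting with x₁ ∈ S, then S equals the prefix {x₁,…,x_k}, where x_{k+1} is the first element of the series not contained in S. -/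
open Finset

/-- The prefix `{x₁, …, x_k}` of a series `e : Fin N → α`. -/
def seriesPrefix {α : Type*} [DecidableEq α] {N : ℕ} (e : Fin N → α) (k : ℕ) : Finset α :=
  (Finset.univ.filter (fun i : Fin N => (i : ℕ) < k)).image e

/-- `S` is a nonempty proper subset of the ground finite type. -/
def ProperNE {α : Type*} [Fintype α] (S : Finset α) : Prop :=
  S.Nonempty ∧ S ⊂ Finset.univ

theorem stmt_10 {α : Type*} [Fintype α] [DecidableEq α]
    {N : ℕ} (hN : N = Fintype.card α)
    (e : Fin N → α) (hbij : Function.Bijective e)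
    (π : α → Finset α → ℝ)
    (hmono : ∀ (S T : Finset α) (x : α), S.Nonempty → S ⊆ T → T ⊂ Finset.univ →
      x ∉ T → π x T ≤ π x S)
    (hseries : ∀ (k : ℕ) (hk : k < N), 0 < k →
      ∀ y, y ∉ seriesPrefix e k → π (e ⟨k, hk⟩) (seriesPrefix e k) ≤ π y (seriesPrefix e k))
    (S : Finset α)
    (hmax : ProperNE S ∧ ∀ T, ProperNE T → Mpi π T ≤ Mpi π S)
    (hminimal : ∀ T, T ⊂ S → ¬ (ProperNE T ∧ ∀ T', ProperNE T' → Mpi π T' ≤ Mpi π T))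
    (hk0 : 0 < N) (hx1 : e ⟨0, hk0⟩ ∈ S)
    (k : ℕ) (hk : k < N) (hkpos : 0 < k)
    (hfirst : ∀ i : Fin N, (i : ℕ) < k → e i ∈ S)
    (hnot : e ⟨k, hk⟩ ∉ S) :
    S = seriesPrefix e k := by
  set P := seriesPrefix e k with hP
  have hsub : P ⊆ S := by
    intro x hx
    simp only [hP, seriesPrefix, Finset.mem_image, Finset.mem_filter] at hx
    obtain ⟨i, ⟨_, hi⟩, rfl⟩ := hx
    exact hfirst i hi
  have hPne : P.Nonempty := by
    refine ⟨e ⟨0, hk0⟩, ?_⟩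
    simp [hP, seriesPrefix, Finset.mem_image]
    exact ⟨⟨0, hk0⟩, hkpos, rfl⟩
  have hnotP : e ⟨k, hk⟩ ∉ P := fun h => hnot (hsub h)
  have hSuniv : S ⊂ Finset.univ := hmax.1.2
  have hPuniv : P ⊂ Finset.univ := lt_of_le_of_lt hsub hSuniv
  -- Mpi S ≤ π (e k) S
  have h1 : Mpi π S ≤ π (e ⟨k, hk⟩) S := by
    apply csInf_le (Set.Finite.bddBelow (Set.toFinite _))
    exact ⟨e ⟨k, hk⟩, hnot, rfl⟩
  -- π (e k) S ≤ π (e k) P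
  have h2 : π (e ⟨k, hk⟩) S ≤ π (e ⟨k, hk⟩) P := hmono P S _ hPne hsub hSuniv hnot
  -- π (e k) P ≤ Mpi P
  have h3 : π (e ⟨k, hk⟩) P ≤ Mpi π P := by
    unfold Mpi
    refine le_csInf ⟨π (e ⟨k, hk⟩) P, ⟨e ⟨k, hk⟩, hnotP, rfl⟩⟩ ?_
    rintro b ⟨y, hy, rfl⟩
    exact hseries k hk hkpos y hy
  have hMpi : Mpi π S ≤ Mpi π P := h1.trans (h2.trans h3)
  by_contra hne
  have hss : P ⊂ S := ⟨hsub, fun h => hne (le_antisymm h hsub)⟩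
  exact hminimal P hss ⟨⟨hPne, hPuniv⟩,
    fun T' hT' => (hmax.2 T' hT').trans hMpi⟩
end
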